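/- Consider a client i with L-smooth objective f_i and L-Lipschitz stochastic gradient maps, and two coupled local-momentum sequences built with the SAME batches from starting points w_k and w_{k−1}. Then for every τ ∈ {0,…,E}, ‖w_{k,τ}^{(i)} − ŵ_{k−1,τ}^{(i)}‖ ≤ (1 + 2ηLE)^τ·‖w_k − w_{k−1}‖. -/

import Mathlib

open MeasureTheory Finset

/-!
Write `D τ = ‖w τ - ŵ τ‖` and `V τ = ‖v τ - v̂ τ‖`. Because both sequences use the same batch maps,
the Lipschitz bounds give the coupled scalar recursion `V 0 ≤ L D 0`,
`V (τ+1) ≤ V τ + L D (τ+1) + L D τ` and `D (τ+1) ≤ D τ + η V τ`. By joint induction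
`D τ ≤ Aᵗ D 0` and `V τ ≤ L (2τ+1) Aᵗ D 0` with `A = 1 + 2ηLE`, the factor `A` absorbing
`1 + ηL(2τ+1)` since `τ < E`.
-/

lemma norm_sub_smul_sub_sub_smul_le {F : Type*} [SeminormedAddCommGroup F] [NormedSpace ℝ F]
    {η : ℝ} (hη : 0 ≤ η) (x y v u : F) :
    ‖(x - η • v) - (y - η • u)‖ ≤ ‖x - y‖ + η * ‖v - u‖ := by
  calc ‖(x - η • v) - (y - η • u)‖ = ‖(x - y) - η • (v - u)‖ := by
        rw [smul_sub]; abel_nf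
    _ ≤ ‖x - y‖ + ‖η • (v - u)‖ := norm_sub_le _ _
    _ = ‖x - y‖ + η * ‖v - u‖ := by rw [norm_smul, Real.norm_of_nonneg hη]

lemma norm_momentum_sub_momentum_le {F : Type*} [SeminormedAddCommGroup F] {L : ℝ} {g : F → F}
    (hg : ∀ x y, ‖g x - g y‖ ≤ L * ‖x - y‖) (x x' y y' v u : F) :
    ‖(g x' + v - g x) - (g y' + u - g y)‖ ≤ ‖v - u‖ + L * ‖x' - y'‖ + L * ‖x - y‖ := by
  calc ‖(g x' + v - g x) - (g y' + u - g y)‖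
        = ‖(g x' - g y') + (v - u) - (g x - g y)‖ := by abel_nf
    _ ≤ ‖g x' - g y'‖ + ‖v - u‖ + ‖g x - g y‖ :=
        (norm_sub_le _ _).trans (add_le_add_left (norm_add_le _ _) _)
    _ ≤ ‖v - u‖ + L * ‖x' - y'‖ + L * ‖x - y‖ := by linarith [hg x' y', hg x y]

section CoupledRecursion

variable {L η A : ℝ} {n : ℕ} {D V : ℕ → ℝ}

lemma coupled_dist_succ_le (hL : 0 ≤ L) (hη : 0 ≤ η) (hA : 1 + 2 * η * L * n ≤ A)
    (hD0 : 0 ≤ D 0) {σ : ℕ} (hσ : σ < n) (hD : D (σ + 1) ≤ D σ + η * V σ)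
    (hDσ : D σ ≤ A ^ σ * D 0) (hVσ : V σ ≤ L * (2 * σ + 1) * A ^ σ * D 0) :
    D (σ + 1) ≤ A ^ (σ + 1) * D 0 := by
  have hσn : (σ : ℝ) + 1 ≤ n := by exact_mod_cast hσ
  have hgrowth : 1 + η * L * (2 * σ + 1) ≤ A := by nlinarith [mul_nonneg hη hL]
  have hA0 : 0 ≤ A := by nlinarith [mul_nonneg hη hL, (Nat.cast_nonneg σ : (0 : ℝ) ≤ σ)]
  have hP : 0 ≤ A ^ σ * D 0 := by positivity
  calc D (σ + 1) ≤ A ^ σ * D 0 + η * (L * (2 * σ + 1) * A ^ σ * D 0) :=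
        hD.trans (add_le_add hDσ (mul_le_mul_of_nonneg_left hVσ hη))
    _ = (1 + η * L * (2 * σ + 1)) * (A ^ σ * D 0) := by ring
    _ ≤ A * (A ^ σ * D 0) := mul_le_mul_of_nonneg_right hgrowth hP
    _ = A ^ (σ + 1) * D 0 := by ring

lemma coupled_momentum_succ_le (hL : 0 ≤ L) (hA : 1 ≤ A) (hD0 : 0 ≤ D 0) {σ : ℕ}
    (hV : V (σ + 1) ≤ V σ + L * D (σ + 1) + L * D σ)
    (hDσ : D σ ≤ A ^ σ * D 0) (hDσ' : D (σ + 1) ≤ A ^ (σ + 1) * D 0)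
    (hVσ : V σ ≤ L * (2 * σ + 1) * A ^ σ * D 0) :
    V (σ + 1) ≤ L * (2 * ↑(σ + 1) + 1) * A ^ (σ + 1) * D 0 := by
  have hmono : A ^ σ * D 0 ≤ A ^ (σ + 1) * D 0 :=
    mul_le_mul_of_nonneg_right (pow_le_pow_right₀ hA σ.le_succ) hD0
  have hσ : (0 : ℝ) ≤ 2 * σ + 2 := by positivity
  push_cast
  nlinarith [mul_le_mul_of_nonneg_left hmono (mul_nonneg hL hσ),
    mul_le_mul_of_nonneg_left hDσ hL, mul_le_mul_of_nonneg_left hDσ' hL]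

lemma coupled_bounds_of_lt (hL : 0 ≤ L) (hη : 0 ≤ η) (hA : 1 + 2 * η * L * n ≤ A)
    (hD0 : 0 ≤ D 0) (hV0 : V 0 ≤ L * D 0)
    (hV : ∀ τ, τ + 1 < n → V (τ + 1) ≤ V τ + L * D (τ + 1) + L * D τ)
    (hD : ∀ τ, τ < n → D (τ + 1) ≤ D τ + η * V τ) :
    ∀ τ < n, D τ ≤ A ^ τ * D 0 ∧ V τ ≤ L * (2 * τ + 1) * A ^ τ * D 0 := by
  have hA1 : 1 ≤ A := by nlinarith [mul_nonneg hη hL, (Nat.cast_nonneg n : (0 : ℝ) ≤ n)]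
  intro τ hτ
  induction τ with
  | zero => simpa using hV0
  | succ σ ih =>
    obtain ⟨hDσ, hVσ⟩ := ih (by omega)
    have hDσ' := coupled_dist_succ_le hL hη hA hD0 (by omega) (hD σ (by omega)) hDσ hVσ
    exact ⟨hDσ', coupled_momentum_succ_le hL hA1 hD0 (hV σ hτ) hDσ hDσ' hVσ⟩

theorem coupled_dist_le_pow (hL : 0 ≤ L) (hη : 0 ≤ η) (hA : 1 + 2 * η * L * n ≤ A)
    (hD0 : 0 ≤ D 0) (hV0 : V 0 ≤ L * D 0)
    (hV : ∀ τ, τ + 1 < n → V (τ + 1) ≤ V τ + L * D (τ + 1) + L * D τ)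
    (hD : ∀ τ, τ < n → D (τ + 1) ≤ D τ + η * V τ) :
    ∀ τ ≤ n, D τ ≤ A ^ τ * D 0 := by
  have hbounds := coupled_bounds_of_lt hL hη hA hD0 hV0 hV hD
  rintro (_ | σ) hτ
  · simp
  · obtain ⟨hDσ, hVσ⟩ := hbounds σ (by omega)
    exact coupled_dist_succ_le hL hη hA hD0 (by omega) (hD σ (by omega)) hDσ hVσ

end CoupledRecursion

theorem stmt12_general
    {d : ℕ} (L η : ℝ) (hL : 0 < L) (hη : 0 < η) (E : ℕ)
    (f : EuclideanSpace ℝ (Fin d) → ℝ)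
    (hsmooth : ∀ x y, ‖gradient f x - gradient f y‖ ≤ L * ‖x - y‖)
    (G : ℕ → EuclideanSpace ℝ (Fin d) → EuclideanSpace ℝ (Fin d))
    (hGlip : ∀ τ x y, ‖G τ x - G τ y‖ ≤ L * ‖x - y‖)
    (wk wk1 : EuclideanSpace ℝ (Fin d))
    (w wh v vh : ℕ → EuclideanSpace ℝ (Fin d))
    (hw0 : w 0 = wk) (hwh0 : wh 0 = wk1)
    (hv0 : v 0 = gradient f wk) (hvh0 : vh 0 = gradient f wk1)
    (hv : ∀ τ, 1 ≤ τ → τ ≤ E - 1 → v τ = G τ (w τ) + v (τ - 1) - G τ (w (τ - 1)))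
    (hvh : ∀ τ, 1 ≤ τ → τ ≤ E - 1 → vh τ = G τ (wh τ) + vh (τ - 1) - G τ (wh (τ - 1)))
    (hw : ∀ τ, τ ≤ E - 1 → w (τ + 1) = w τ - η • v τ)
    (hwh : ∀ τ, τ ≤ E - 1 → wh (τ + 1) = wh τ - η • vh τ) :
    ∀ τ, τ ≤ E →
      ‖w τ - wh τ‖ ≤ (1 + 2 * η * L * E) ^ τ * ‖wk - wk1‖ := by
  have hV0 : ‖v 0 - vh 0‖ ≤ L * ‖w 0 - wh 0‖ := by
    rw [hv0, hvh0, hw0, hwh0]; exact hsmooth wk wk1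
  have hV : ∀ τ, τ + 1 < E → ‖v (τ + 1) - vh (τ + 1)‖ ≤
      ‖v τ - vh τ‖ + L * ‖w (τ + 1) - wh (τ + 1)‖ + L * ‖w τ - wh τ‖ := by
    intro τ hτ
    rw [hv (τ + 1) (by omega) (by omega), hvh (τ + 1) (by omega) (by omega),
      Nat.add_sub_cancel]
    exact norm_momentum_sub_momentum_le (hGlip (τ + 1)) _ _ _ _ _ _
  have hD : ∀ τ, τ < E → ‖w (τ + 1) - wh (τ + 1)‖ ≤ ‖w τ - wh τ‖ + η * ‖v τ - vh τ‖ := by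
    intro τ hτ
    rw [hw τ (by omega), hwh τ (by omega)]
    exact norm_sub_smul_sub_sub_smul_le hη.le _ _ _ _
  intro τ hτ
  simpa only [hw0, hwh0] using
    coupled_dist_le_pow (D := fun τ ↦ ‖w τ - wh τ‖) (V := fun τ ↦ ‖v τ - vh τ‖)
      hL.le hη.le le_rfl (norm_nonneg _) hV0 hV hD τ hτ

/-- claim (eq. 55) inside Lemma "nov-1-lem3".
Client `i` has an `L`-smooth objective `f` and `L`-Lipschitz stochastic-gradient maps
`G τ = ∇̃f_i(·; B_{k,τ}^{(i)})` (the batches are fixed, so this is deterministic).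
Two coupled local-momentum sequences are run from the starting points `wk = w_k` and
`wk1 = w_{k−1}`, using the SAME batch at each local step.  Then for every `τ ∈ {0,…,E}`,
`‖w_{k,τ} − ŵ_{k−1,τ}‖ ≤ (1 + 2ηLE)^τ · ‖w_k − w_{k−1}‖`. -/
theorem stmt12
    {d : ℕ} (L η : ℝ) (hL : 0 < L) (hη : 0 < η) (E : ℕ) (hE : 1 ≤ E)
    (f : EuclideanSpace ℝ (Fin d) → ℝ)
    (hdiff : Differentiable ℝ f)
    (hsmooth : ∀ x y, ‖gradient f x - gradient f y‖ ≤ L * ‖x - y‖)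
    (G : ℕ → EuclideanSpace ℝ (Fin d) → EuclideanSpace ℝ (Fin d))
    (hGlip : ∀ τ x y, ‖G τ x - G τ y‖ ≤ L * ‖x - y‖)
    (wk wk1 : EuclideanSpace ℝ (Fin d))
    (w wh v vh : ℕ → EuclideanSpace ℝ (Fin d))
    (hw0 : w 0 = wk) (hwh0 : wh 0 = wk1)
    (hv0 : v 0 = gradient f wk) (hvh0 : vh 0 = gradient f wk1)
    (hv : ∀ τ, 1 ≤ τ → τ ≤ E - 1 → v τ = G τ (w τ) + v (τ - 1) - G τ (w (τ - 1)))
    (hvh : ∀ τ, 1 ≤ τ → τ ≤ E - 1 → vh τ = G τ (wh τ) + vh (τ - 1) - G τ (wh (τ - 1)))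
    (hw : ∀ τ, τ ≤ E - 1 → w (τ + 1) = w τ - η • v τ)
    (hwh : ∀ τ, τ ≤ E - 1 → wh (τ + 1) = wh τ - η • vh τ) :
    ∀ τ, τ ≤ E →
      ‖w τ - wh τ‖ ≤ (1 + 2 * η * L * E) ^ τ * ‖wk - wk1‖ :=
  stmt12_general L η hL hη E f hsmooth G hGlip wk wk1 w wh v vh hw0 hwh0 hv0 hvh0 hv hvh hw hwh
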